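/- Fix p ∈ (0,1) and ε > 0. For each n, let Z = (z_1,…,z_{K_n}) be K_n = ⌈2^{n(1−H₂(p)+ε)}⌉ strings drawn independently and uniformly from {0,1}^n, and independently let y be obtained from x ∈ {0,1}^n by flipping each coordinate independently with probability p. Then max_{x∈{0,1}^n} P[ for all i ≤ K_n, d(z_i, x) ≠ d(y, x) ] → 0 as n → ∞, where d denotes Hamming distance. -/

import Mathlib

namespace CIT

noncomputable section

open Filter Finset

/-- The binary entropy function `H₂(p) = −p log₂ p − (1−p) log₂(1−p)`. -/
def binEntropy (p : ℝ) : ℝ :=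
  -p * Real.logb 2 p - (1 - p) * Real.logb 2 (1 - p)

/-! ### Auxiliary lemmas -/

lemma card_sphere (n m : ℕ) (x : Fin n → Bool) :
    (univ.filter (fun z : Fin n → Bool => hammingDist z x = m)).card = n.choose m := by
  have : n.choose m = (Finset.powersetCard m (univ : Finset (Fin n))).card := by
    rw [Finset.card_powersetCard]; simp
  rw [this]
  apply Finset.card_bij' (fun z _ => univ.filter (fun t => z t ≠ x t))
    (fun s _ => fun t => if t ∈ s then !(x t) else x t)
  · intro z hz
    simp only [mem_filter, mem_univ, true_and] at hz
    simp [Finset.mem_powersetCard]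
    exact hz
  · intro s hs
    simp only [Finset.mem_powersetCard] at hs
    simp only [mem_filter, mem_univ, true_and, hammingDist]
    rw [← hs.2]
    congr 1
    ext t
    by_cases h : t ∈ s <;> simp [h]
  · intro z hz
    funext t
    rcases Bool.eq_false_or_eq_true (z t) with h1 | h1 <;>
      rcases Bool.eq_false_or_eq_true (x t) with h2 | h2 <;> simp [h1, h2]
  · intro s hs
    ext t
    by_cases h : t ∈ s <;> simp [h]

lemma choose_le_two_pow' (n m : ℕ) : n.choose m ≤ 2^n := by
  rw [← card_sphere n m (fun _ => false)]
  calc (univ.filter (fun z : Fin n → Bool => hammingDist z (fun _ => false) = m)).card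
      ≤ (univ : Finset (Fin n → Bool)).card := Finset.card_filter_le _ _
    _ = 2^n := by simp [Finset.card_univ]

lemma choose_key (n k : ℕ) (hkn : k < n) :
    (n.choose (k+1) : ℝ) * (k+1) = (n.choose k : ℝ) * ((n:ℝ) - k) := by
  have h2 := congrArg (Nat.cast : ℕ → ℝ) (Nat.choose_succ_right_eq n k)
  push_cast [Nat.cast_sub hkn.le] at h2
  linarith

lemma key2_up (n k w : ℕ) (hk : k < w) (hw : w ≤ n) :
    (n.choose k : ℝ) * (1 - (w:ℝ)/n) ≤ (n.choose (k+1) : ℝ) * ((w:ℝ)/n) := by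
  have hn0 : (0:ℝ) < n := by
    have : 0 < n := by omega
    exact_mod_cast this
  have hkn : k < n := lt_of_lt_of_le hk hw
  have key := choose_key n k hkn
  have hwR : (w:ℝ) ≤ n := by exact_mod_cast hw
  have hkwR : (k:ℝ) + 1 ≤ w := by exact_mod_cast hk
  have hc1 : (0:ℝ) ≤ n.choose k := by positivity
  have ineq : ((n:ℝ) - w) * ((k:ℝ)+1) ≤ ((n:ℝ) - k) * w := by nlinarith
  have hpos : (0:ℝ) < (n:ℝ) * ((k:ℝ)+1) := by positivity
  refine le_of_mul_le_mul_right ?_ hpos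
  have hβn : (1 - (w:ℝ)/n) * (n:ℝ) = (n:ℝ) - w := by field_simp
  have hαn : ((w:ℝ)/n) * (n:ℝ) = w := by field_simp
  calc (n.choose k : ℝ) * (1 - (w:ℝ)/n) * ((n:ℝ) * ((k:ℝ)+1))
      = ((n.choose k : ℝ) * ((n:ℝ) - w)) * ((k:ℝ)+1) := by rw [← hβn]; ring
    _ ≤ ((n.choose k : ℝ) * (((n:ℝ) - k) * w)) := by
        rw [mul_assoc]
        exact mul_le_mul_of_nonneg_left ineq hc1
    _ = ((n.choose k : ℝ) * ((n:ℝ) - k)) * w := by ring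
    _ = ((n.choose (k+1) : ℝ) * ((k:ℝ)+1)) * w := by rw [key]
    _ = (n.choose (k+1) : ℝ) * ((w:ℝ)/n) * ((n:ℝ) * ((k:ℝ)+1)) := by
        field_simp

lemma key2_down (n k w : ℕ) (hk : w ≤ k) (hkn : k < n) :
    (n.choose (k+1) : ℝ) * ((w:ℝ)/n) ≤ (n.choose k : ℝ) * (1 - (w:ℝ)/n) := by
  have hn0 : (0:ℝ) < n := by
    have : 0 < n := by omega
    exact_mod_cast this
  have key := choose_key n k hkn
  have hwR : (w:ℝ) ≤ k := by exact_mod_cast hk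
  have hknR : (k:ℝ) + 1 ≤ n := by exact_mod_cast hkn
  have hw0 : (0:ℝ) ≤ w := by positivity
  have hc1 : (0:ℝ) ≤ n.choose k := by positivity
  have ineq : ((n:ℝ) - k) * w ≤ ((n:ℝ) - w) * ((k:ℝ)+1) := by nlinarith
  have hpos : (0:ℝ) < (n:ℝ) * ((k:ℝ)+1) := by positivity
  refine le_of_mul_le_mul_right ?_ hpos
  have hβn : (1 - (w:ℝ)/n) * (n:ℝ) = (n:ℝ) - w := by field_simp
  have hαn : ((w:ℝ)/n) * (n:ℝ) = w := by field_simp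
  calc (n.choose (k+1) : ℝ) * ((w:ℝ)/n) * ((n:ℝ) * ((k:ℝ)+1))
      = ((n.choose (k+1) : ℝ) * ((k:ℝ)+1)) * w := by field_simp
    _ = ((n.choose k : ℝ) * ((n:ℝ) - k)) * w := by rw [key]
    _ = (n.choose k : ℝ) * (((n:ℝ) - k) * w) := by ring
    _ ≤ (n.choose k : ℝ) * (((n:ℝ) - w) * ((k:ℝ)+1)) := mul_le_mul_of_nonneg_left ineq hc1
    _ = (n.choose k : ℝ) * (1 - (w:ℝ)/n) * ((n:ℝ) * ((k:ℝ)+1)) := by rw [← hβn]; ring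

lemma mode_bound (n w : ℕ) (hw : w ≤ n) :
    1 ≤ ((n:ℝ)+1) * (n.choose w : ℝ) * ((w:ℝ)/n)^w * (1-(w:ℝ)/n)^(n-w) := by
  rcases Nat.eq_zero_or_pos n with hn | hn
  · subst hn; interval_cases w; norm_num
  have hn0 : (0:ℝ) < n := by exact_mod_cast hn
  set α : ℝ := (w:ℝ)/n with hα
  have hα0 : 0 ≤ α := by positivity
  have hα1 : α ≤ 1 := by
    rw [hα, div_le_one hn0]; exact_mod_cast hw
  have hβ0 : 0 ≤ 1 - α := by linarith
  set a : ℕ → ℝ := fun k => (n.choose k : ℝ) * α^k * (1-α)^(n-k) with ha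
  have hnonneg : ∀ k, 0 ≤ a k := by intro k; rw [ha]; positivity
  have hup : ∀ k, k < w → a k ≤ a (k+1) := by
    intro k hk
    have hnk : n - k = (n-(k+1)) + 1 := by omega
    have key2 := key2_up n k w hk hw
    rw [ha]
    calc (n.choose k : ℝ) * α^k * (1-α)^(n-k)
        = ((n.choose k : ℝ) * (1-α)) * (α^k * (1-α)^(n-(k+1))) := by
          rw [hnk, pow_succ]; ring
      _ ≤ ((n.choose (k+1) : ℝ) * α) * (α^k * (1-α)^(n-(k+1))) := by
          exact mul_le_mul_of_nonneg_right key2 (by positivity)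
      _ = (n.choose (k+1) : ℝ) * α^(k+1) * (1-α)^(n-(k+1)) := by
          rw [pow_succ]; ring
  have hdown : ∀ k, w ≤ k → a (k+1) ≤ a k := by
    intro k hk
    by_cases hkn : k < n
    · have hnk : n - k = (n-(k+1)) + 1 := by omega
      have key2 := key2_down n k w hk hkn
      rw [ha]
      calc (n.choose (k+1) : ℝ) * α^(k+1) * (1-α)^(n-(k+1))
          = ((n.choose (k+1) : ℝ) * α) * (α^k * (1-α)^(n-(k+1))) := by
            rw [pow_succ]; ring
        _ ≤ ((n.choose k : ℝ) * (1-α)) * (α^k * (1-α)^(n-(k+1))) := by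
            exact mul_le_mul_of_nonneg_right key2 (by positivity)
        _ = (n.choose k : ℝ) * α^k * (1-α)^(n-k) := by
            rw [hnk, pow_succ]; ring
    · have h0 : n.choose (k+1) = 0 := Nat.choose_eq_zero_of_lt (by omega)
      have : a (k+1) = 0 := by rw [ha]; simp [h0]
      rw [this]; exact hnonneg k
  have haux1 : ∀ d, a (w - d) ≤ a w := by
    intro d
    induction d with
    | zero => simp
    | succ d ih =>
      by_cases hd : d < w
      · have h1 : w - (d+1) < w := by omega
        have h2 : w - (d+1) + 1 = w - d := by omega
        calc a (w-(d+1)) ≤ a (w-(d+1)+1) := hup _ h1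
          _ = a (w - d) := by rw [h2]
          _ ≤ a w := ih
      · have h2 : w - (d+1) = w - d := by omega
        rw [h2]; exact ih
  have haux2 : ∀ d, a (w + d) ≤ a w := by
    intro d
    induction d with
    | zero => simp
    | succ d ih =>
      calc a (w+(d+1)) = a ((w+d)+1) := by ring_nf
        _ ≤ a (w+d) := hdown _ (by omega)
        _ ≤ a w := ih
  have hmax : ∀ k, a k ≤ a w := by
    intro k
    rcases le_total k w with h | h
    · have : k = w - (w - k) := by omega
      rw [this]; exact haux1 _
    · have : k = w + (k - w) := by omega
      rw [this]; exact haux2 _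
  have hsum : ∑ k ∈ Finset.range (n+1), a k = 1 := by
    rw [ha]
    calc ∑ k ∈ Finset.range (n+1), (n.choose k : ℝ) * α^k * (1-α)^(n-k)
        = ∑ k ∈ Finset.range (n+1), α^k * (1-α)^(n-k) * (n.choose k : ℝ) :=
          Finset.sum_congr rfl (fun k _ => by ring)
      _ = (α + (1-α))^n := (add_pow α (1-α) n).symm
      _ = 1 := by norm_num
  have hle : ∑ k ∈ Finset.range (n+1), a k ≤ (n+1) • a w :=
    Finset.sum_le_card_nsmul _ _ _ (fun k _ => hmax k) |>.trans_eq (by rw [Finset.card_range])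
  rw [hsum, nsmul_eq_mul] at hle
  push_cast at hle
  calc (1:ℝ) ≤ ((n:ℝ)+1) * a w := hle
    _ = ((n:ℝ)+1) * (n.choose w : ℝ) * α^w * (1-α)^(n-w) := by rw [ha]; ring

lemma pow_eq_rpow_entropy (n w : ℕ) (h0 : 0 < w) (h1 : w < n) :
    ((w:ℝ)/n)^w * (1-(w:ℝ)/n)^(n-w) = (2:ℝ)^(-((n:ℝ) * binEntropy ((w:ℝ)/n))) := by
  have hn0 : (0:ℝ) < n := by
    have : 0 < n := h0.trans h1
    exact_mod_cast this
  set α : ℝ := (w:ℝ)/n with hα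
  have hα0 : 0 < α := by positivity
  have hα1 : α < 1 := by
    rw [hα, div_lt_one hn0]; exact_mod_cast h1
  have hβ0 : (0:ℝ) < 1 - α := by linarith
  have hnα : (n:ℝ) * α = w := by rw [hα]; field_simp
  have hnβ : (n:ℝ) * (1 - α) = (n:ℝ) - w := by rw [hα]; field_simp
  have e1 : α^w = (2:ℝ)^(Real.logb 2 α * w) := by
    rw [Real.rpow_mul (by norm_num : (0:ℝ) ≤ 2), Real.rpow_logb (by norm_num) (by norm_num) hα0,
      Real.rpow_natCast]
  have e2 : (1-α)^(n-w) = (2:ℝ)^(Real.logb 2 (1-α) * ((n:ℝ) - w)) := by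
    rw [Real.rpow_mul (by norm_num : (0:ℝ) ≤ 2), Real.rpow_logb (by norm_num) (by norm_num) hβ0]
    rw [show ((n:ℝ) - w) = ((n - w : ℕ) : ℝ) by push_cast [Nat.cast_sub h1.le]; ring]
    rw [Real.rpow_natCast]
  rw [e1, e2, ← Real.rpow_add (by norm_num : (0:ℝ) < 2)]
  congr 1
  simp only [binEntropy]
  linear_combination (-(Real.logb 2 α)) * hnα + (-(Real.logb 2 (1-α))) * hnβ

lemma choose_entropy_lower (n w : ℕ) (h0 : 0 < w) (h1 : w < n) :
    (2:ℝ)^((n:ℝ) * binEntropy ((w:ℝ)/n)) ≤ ((n:ℝ)+1) * (n.choose w : ℝ) := by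
  have hm := mode_bound n w h1.le
  rw [mul_assoc] at hm
  rw [pow_eq_rpow_entropy n w h0 h1] at hm
  set x : ℝ := (n:ℝ) * binEntropy ((w:ℝ)/n)
  have h2 : (0:ℝ) < (2:ℝ)^x := Real.rpow_pos_of_pos (by norm_num) _
  have h3 : (2:ℝ)^(-x) = ((2:ℝ)^x)⁻¹ := Real.rpow_neg (by norm_num) _
  rw [h3] at hm
  calc (2:ℝ)^x = (2:ℝ)^x * 1 := by ring
    _ ≤ (2:ℝ)^x * (((n:ℝ)+1) * (n.choose w : ℝ) * ((2:ℝ)^x)⁻¹) :=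
        mul_le_mul_of_nonneg_left hm h2.le
    _ = ((n:ℝ)+1) * (n.choose w : ℝ) * ((2:ℝ)^x * ((2:ℝ)^x)⁻¹) := by ring
    _ = ((n:ℝ)+1) * (n.choose w : ℝ) := by rw [mul_inv_cancel₀ h2.ne']; ring

lemma Q_sum (n m : ℕ) (x : Fin n → Bool) :
    ∑ ζ : Fin n → Bool, (((2:ℝ)^n)⁻¹ * if hammingDist ζ x ≠ m then 1 else 0)
      = 1 - (n.choose m : ℝ)/2^n := by
  rw [← Finset.mul_sum, Finset.sum_boole]
  have hsplit := Finset.card_filter_add_card_filter_not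
    (s := (univ : Finset (Fin n → Bool))) (p := fun ζ => hammingDist ζ x = m)
  have hcard : (univ : Finset (Fin n → Bool)).card = 2^n := by
    simp [Finset.card_univ]
  rw [card_sphere, hcard] at hsplit
  have hle : n.choose m ≤ 2^n := by omega
  have h2 : ((univ.filter (fun ζ : Fin n → Bool => ¬ hammingDist ζ x = m)).card : ℝ)
      = 2^n - (n.choose m : ℝ) := by
    have : (univ.filter (fun ζ : Fin n → Bool => ¬ hammingDist ζ x = m)).card
        = 2^n - n.choose m := by omega
    rw [this]
    push_cast [Nat.cast_sub hle]
    ring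
  rw [h2]
  have h2n : ((2:ℝ)^n) ≠ 0 := by positivity
  field_simp

lemma weight_eq (n : ℕ) (f x : Fin n → Bool) :
    hammingDist (fun t => xor (f t) (x t)) x = hammingDist f (fun _ => false) := by
  simp only [hammingDist]
  congr 1
  apply Finset.filter_congr
  intro t _
  rcases Bool.eq_false_or_eq_true (f t) with h1 | h1 <;>
    rcases Bool.eq_false_or_eq_true (x t) with h2 | h2 <;> simp [h1, h2]

lemma reduce (n K : ℕ) (p : ℝ) (x : Fin n → Bool) :
    (∑ z : Fin K → (Fin n → Bool), ∑ f : Fin n → Bool,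
      (((2:ℝ)^n)⁻¹) ^ K * (∏ i, if f i then p else 1-p) *
        (if ∀ i : Fin K,
            hammingDist (z i) x ≠ hammingDist (fun t => xor (f t) (x t)) x
          then (1:ℝ) else 0))
    = ∑ f : Fin n → Bool, (∏ i, if f i then p else 1-p) *
        (1 - (n.choose (hammingDist f (fun _ => false)) : ℝ)/2^n)^K := by
  rw [Finset.sum_comm]
  apply Finset.sum_congr rfl
  intro f _
  set μ : ℝ := ∏ i, if f i then p else 1-p with hμ
  set m : ℕ := hammingDist f (fun _ => false) with hm
  have hmm : ∀ z : Fin K → (Fin n → Bool),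
      (if ∀ i : Fin K, hammingDist (z i) x ≠ hammingDist (fun t => xor (f t) (x t)) x
        then (1:ℝ) else 0)
      = ∏ i : Fin K, if hammingDist (z i) x ≠ m then (1:ℝ) else 0 := by
    intro z
    rw [Finset.prod_boole]
    simp [weight_eq n f x]
    rfl
  calc ∑ z : Fin K → (Fin n → Bool), (((2:ℝ)^n)⁻¹) ^ K * μ *
        (if ∀ i : Fin K, hammingDist (z i) x ≠ hammingDist (fun t => xor (f t) (x t)) x
          then (1:ℝ) else 0)
      = ∑ z : Fin K → (Fin n → Bool), μ *
          ∏ i : Fin K, (((2:ℝ)^n)⁻¹ * if hammingDist (z i) x ≠ m then (1:ℝ) else 0) := by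
        apply Finset.sum_congr rfl
        intro z _
        rw [hmm z, Finset.prod_mul_distrib, Finset.prod_const]
        simp [mul_comm, mul_assoc, mul_left_comm]
    _ = μ * ∑ z : Fin K → (Fin n → Bool),
          ∏ i : Fin K, (((2:ℝ)^n)⁻¹ * if hammingDist (z i) x ≠ m then (1:ℝ) else 0) := by
        rw [Finset.mul_sum]
    _ = μ * ∏ i : Fin K, ∑ ζ : Fin n → Bool,
          (((2:ℝ)^n)⁻¹ * if hammingDist ζ x ≠ m then (1:ℝ) else 0) := by
        rw [Fintype.prod_sum]
    _ = μ * (1 - (n.choose m : ℝ)/2^n)^K := by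
        rw [Q_sum n m x, Finset.prod_const]
        simp

lemma mu_sum (n : ℕ) (p : ℝ) :
    ∑ f : Fin n → Bool, (∏ i, if f i then p else 1-p) = 1 := by
  rw [← Fintype.prod_sum (fun (_ : Fin n) (b : Bool) => if b then p else 1-p)]
  simp

lemma weight_as_sum (n : ℕ) (f : Fin n → Bool) :
    ((hammingDist f (fun _ => false) : ℕ) : ℝ) = ∑ t, (if f t then (1:ℝ) else 0) := by
  simp only [hammingDist]
  rw [Finset.sum_boole]
  norm_num

lemma variance_eq (n : ℕ) (p : ℝ) :
    ∑ f : Fin n → Bool, (∏ i, if f i then p else 1-p) *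
      (((hammingDist f (fun _ => false) : ℕ) : ℝ) - n*p)^2 = n * (p*(1-p)) := by
  have hE : ∀ t s : Fin n,
      (∑ f : Fin n → Bool, (∏ i, if f i then p else 1-p) *
        (((if f t then (1:ℝ) else 0) - p) * ((if f s then (1:ℝ) else 0) - p)))
      = if t = s then p*(1-p) else 0 := by
    intro t s
    have hfact : ∀ f : Fin n → Bool,
        (∏ i, if f i then p else 1-p) *
          (((if f t then (1:ℝ) else 0) - p) * ((if f s then (1:ℝ) else 0) - p))
        = ∏ r, ((if f r then p else 1-p) *
            ((if r = t then (if f r then (1:ℝ) else 0) - p else 1) *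
             (if r = s then (if f r then (1:ℝ) else 0) - p else 1))) := by
      intro f
      rw [Finset.prod_mul_distrib, Finset.prod_mul_distrib]
      congr 1
      congr 1
      · simp [Finset.prod_ite_eq']
      · simp [Finset.prod_ite_eq']
    rw [Finset.sum_congr rfl (fun f _ => hfact f)]
    rw [← Fintype.prod_sum (fun (r : Fin n) (b : Bool) => (if b then p else 1-p) *
          ((if r = t then (if b then (1:ℝ) else 0) - p else 1) *
           (if r = s then (if b then (1:ℝ) else 0) - p else 1)))]
    by_cases hts : t = s
    · subst hts
      have hfac : ∀ r : Fin n, (∑ b : Bool, ((if b then p else 1-p) *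
            ((if r = t then (if b then (1:ℝ) else 0) - p else 1) *
             (if r = t then (if b then (1:ℝ) else 0) - p else 1))))
          = if r = t then p*(1-p) else 1 := by
        intro r
        by_cases hr : r = t <;> simp [hr] <;> ring
      rw [Finset.prod_congr rfl (fun r _ => hfac r)]
      simp [Finset.prod_ite_eq']
    · have hfac0 : (∑ b : Bool, ((if b then p else 1-p) *
            ((if t = t then (if b then (1:ℝ) else 0) - p else 1) *
             (if t = s then (if b then (1:ℝ) else 0) - p else 1))))
          = 0 := by
        simp [hts]; ring
      rw [Finset.prod_eq_zero (Finset.mem_univ t) hfac0]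
      simp [hts]
  calc ∑ f : Fin n → Bool, (∏ i, if f i then p else 1-p) *
        (((hammingDist f (fun _ => false) : ℕ) : ℝ) - n*p)^2
      = ∑ f : Fin n → Bool, ∑ t, ∑ s, (∏ i, if f i then p else 1-p) *
          (((if f t then (1:ℝ) else 0) - p) * ((if f s then (1:ℝ) else 0) - p)) := by
        apply Finset.sum_congr rfl
        intro f _
        have h1 : ((hammingDist f (fun _ => false) : ℕ) : ℝ) - n*p
            = ∑ t, ((if f t then (1:ℝ) else 0) - p) := by
          rw [Finset.sum_sub_distrib, ← weight_as_sum]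
          simp [Finset.card_univ]
        rw [h1, sq, Finset.sum_mul_sum, Finset.mul_sum]
        apply Finset.sum_congr rfl
        intro t _
        rw [Finset.mul_sum]
    _ = ∑ t, ∑ s : Fin n, (if t = s then p*(1-p) else (0:ℝ)) := by
        rw [Finset.sum_comm]
        apply Finset.sum_congr rfl
        intro t _
        rw [Finset.sum_comm]
        apply Finset.sum_congr rfl
        intro s _
        exact hE t s
    _ = n * (p*(1-p)) := by
        simp [Finset.sum_ite_eq, Finset.card_univ, mul_comm]

lemma M_tendsto (c : ℝ) (hc : 0 < c) :
    Tendsto (fun n : ℕ => Real.exp (c * n) / ((n:ℝ)+1)) atTop atTop := by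
  have h1 : Tendsto (fun x : ℝ => Real.exp x / x) atTop atTop := by
    simpa using Real.tendsto_exp_div_pow_atTop 1
  have h2 : Tendsto (fun x : ℝ => c * x) atTop atTop :=
    Tendsto.const_mul_atTop hc tendsto_id
  have h3 : Tendsto (fun x : ℝ => Real.exp (c * x) / (c * x)) atTop atTop := h1.comp h2
  have h4 : Tendsto (fun x : ℝ => Real.exp (c * x) / (c * x) * (c/2)) atTop atTop :=
    h3.atTop_mul_const (by positivity)
  have h5 : Tendsto (fun x : ℝ => Real.exp (c * x) / (x+1)) atTop atTop := by
    apply tendsto_atTop_mono' _ _ h4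
    filter_upwards [eventually_ge_atTop (1:ℝ)] with x hx
    have hx0 : 0 < x := by linarith
    have heq : Real.exp (c * x) / (c * x) * (c/2) = Real.exp (c * x) / (2*x) := by
      field_simp
    rw [heq]
    apply div_le_div_of_nonneg_left (Real.exp_pos _).le (by linarith) (by linarith)
  exact h5.comp tendsto_natCast_atTop_atTop

lemma bound_tendsto (C c : ℝ) (hc : 0 < c) :
    Tendsto (fun n : ℕ => C * (1/(n:ℝ)) + Real.exp (-(Real.exp (c * n) / ((n:ℝ)+1))))
      atTop (nhds 0) := by
  have hA : Tendsto (fun n : ℕ => C * (1/(n:ℝ))) atTop (nhds 0) := by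
    simpa using tendsto_one_div_atTop_nhds_zero_nat.const_mul C
  have hB : Tendsto (fun n : ℕ => Real.exp (-(Real.exp (c * n) / ((n:ℝ)+1)))) atTop (nhds 0) :=
    Real.tendsto_exp_neg_atTop_nhds_zero.comp (M_tendsto c hc)
  simpa using hA.add hB

set_option maxHeartbeats 2000000 in
/-- **Random covering of Hamming shells.** Fix `p ∈ (0,1)` and `ε > 0` and let
`K n = ⌈2^{n(1−H₂(p)+ε)}⌉`. Draw `K n` strings `z₁,…,z_{K n}` independently and
uniformly from `{0,1}ⁿ` and, independently, let `y` be obtained from `x` by flipping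
each coordinate independently with probability `p` (flip pattern `f`, so
`y = x ⊕ f`). Then the worst-case (over `x`) probability that no `z_i` has the same
Hamming distance from `x` as `y` does tends to `0` as `n → ∞`. -/
theorem random_set_covers_hamming_distance
    (p ε : ℝ) (hp : p ∈ Set.Ioo (0 : ℝ) 1) (hε : 0 < ε)
    (K : ℕ → ℕ) (hK : K = fun (n : ℕ) => ⌈(2 : ℝ) ^ ((n : ℝ) * (1 - binEntropy p + ε))⌉₊) :
    Tendsto
      (fun n : ℕ => ⨆ x : Fin n → Bool,
        ∑ z : Fin (K n) → (Fin n → Bool), ∑ f : Fin n → Bool,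
          (((2 : ℝ) ^ n)⁻¹) ^ (K n) * (∏ i, if f i then p else 1 - p) *
            (if ∀ i : Fin (K n),
                hammingDist (z i) x ≠ hammingDist (fun t => xor (f t) (x t)) x
              then (1 : ℝ) else 0))
      atTop (nhds 0) := by
  obtain ⟨hp0, hp1⟩ := hp
  have hq0 : (0:ℝ) < 1 - p := by linarith
  -- continuity of binEntropy at p
  have hbe : binEntropy = fun q : ℝ => -q * Real.logb 2 q - (1-q) * Real.logb 2 (1-q) := rfl
  have hcont : ContinuousAt binEntropy p := by
    rw [hbe]
    apply ContinuousAt.sub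
    · exact continuousAt_id.neg.mul (Real.continuousAt_logb hp0.ne')
    · exact ((continuous_const.sub continuous_id).continuousAt).mul
        ((Real.continuousAt_logb hq0.ne').comp
          ((continuous_const.sub continuous_id).continuousAt))
  obtain ⟨δ, hδpos, hδ⟩ := Metric.continuousAt_iff.mp hcont (ε/2) (by positivity)
  set δ₀ : ℝ := min δ (min p (1-p)) / 2 with hδ₀def
  have hδ₀pos : 0 < δ₀ := by
    apply div_pos (lt_min hδpos (lt_min hp0 hq0)) two_pos
  have hδ₀δ : δ₀ < δ := by
    have h1 : min δ (min p (1-p)) ≤ δ := min_le_left _ _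
    rw [hδ₀def]; linarith
  have hδ₀p : δ₀ < p := by
    have h1 : min δ (min p (1-p)) ≤ p := (min_le_right _ _).trans (min_le_left _ _)
    rw [hδ₀def]; linarith
  have hδ₀q : δ₀ < 1 - p := by
    have h1 : min δ (min p (1-p)) ≤ 1-p := (min_le_right _ _).trans (min_le_right _ _)
    rw [hδ₀def]; linarith
  set c : ℝ := ε/2 * Real.log 2 with hcdef
  have hc : 0 < c := by
    rw [hcdef]
    have := Real.log_pos one_lt_two
    positivity
  -- rewrite the function using `reduce`
  have hfun : (fun n : ℕ => ⨆ x : Fin n → Bool,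
        ∑ z : Fin (K n) → (Fin n → Bool), ∑ f : Fin n → Bool,
          (((2 : ℝ) ^ n)⁻¹) ^ (K n) * (∏ i, if f i then p else 1 - p) *
            (if ∀ i : Fin (K n),
                hammingDist (z i) x ≠ hammingDist (fun t => xor (f t) (x t)) x
              then (1 : ℝ) else 0))
      = fun n : ℕ => ∑ f : Fin n → Bool, (∏ i, if f i then p else 1-p) *
          (1 - (n.choose (hammingDist f (fun _ => false)) : ℝ)/2^n)^(K n) := by
    funext n
    simp only [reduce n (K n) p]
    exact ciSup_const
  rw [hfun]
  -- nonnegativity / basic facts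
  have hc1 : ∀ n m : ℕ, (n.choose m : ℝ)/2^n ≤ 1 := by
    intro n m
    rw [div_le_one (by positivity)]
    exact_mod_cast choose_le_two_pow' n m
  have hc0 : ∀ n m : ℕ, (0:ℝ) ≤ (n.choose m : ℝ)/2^n := by
    intro n m; positivity
  have hμ0 : ∀ (n : ℕ) (f : Fin n → Bool), (0:ℝ) ≤ ∏ i, if f i then p else 1-p := by
    intro n f
    apply Finset.prod_nonneg
    intro i _
    by_cases h : f i <;> simp [h] <;> linarith
  apply tendsto_of_tendsto_of_tendsto_of_le_of_le' tendsto_const_nhds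
    (bound_tendsto (1/δ₀^2) c hc)
  · -- lower bound 0
    apply Eventually.of_forall
    intro n
    apply Finset.sum_nonneg
    intro f _
    apply mul_nonneg (hμ0 n f)
    apply pow_nonneg
    have := hc1 n (hammingDist f (fun _ => false))
    linarith
  · -- upper bound
    filter_upwards [eventually_ge_atTop 1] with n hn1
    have hn0 : (0:ℝ) < n := by exact_mod_cast hn1
    set M : ℝ := Real.exp (c*n) / ((n:ℝ)+1) with hMdef
    -- good set bound
    have hgood : ∀ f : Fin n → Bool,
        |((hammingDist f (fun _ => false) : ℕ) : ℝ) - n*p| ≤ δ₀*n →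
        (1 - (n.choose (hammingDist f (fun _ => false)) : ℝ)/2^n)^(K n) ≤ Real.exp (-M) := by
      intro f hf
      set w : ℕ := hammingDist f (fun _ => false) with hwdef
      have hwn : w ≤ n := by
        have := hammingDist_le_card_fintype (x := f) (y := fun _ => false)
        simpa using this
      obtain ⟨habs1, habs2⟩ := abs_le.mp hf
      have hw0 : 0 < w := by
        by_contra h
        push_neg at h
        interval_cases w
        simp only [Nat.cast_zero] at habs1
        nlinarith
      have hwlt : w < n := by
        have hwR : (w:ℝ) ≤ n*p + δ₀*n := by linarith
        have : (w:ℝ) < n := by nlinarith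
        exact_mod_cast this
      have hαdist : |((w:ℝ)/n) - p| < δ := by
        have heq : (w:ℝ)/n - p = ((w:ℝ) - n*p)/n := by field_simp
        rw [heq, abs_div, abs_of_pos hn0]
        rw [div_lt_iff₀ hn0]
        have : |(w:ℝ) - n*p| ≤ δ₀ * n := hf
        nlinarith
      have hH : binEntropy p - ε/2 < binEntropy ((w:ℝ)/n) := by
        have h2 := hδ (x := (w:ℝ)/n) (by rw [Real.dist_eq]; exact hαdist)
        rw [Real.dist_eq] at h2
        have := abs_lt.mp h2
        linarith [this.1]
      have hcL := choose_entropy_lower n w hw0 hwlt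
      -- lower bound on success probability
      have hL : (2:ℝ)^(-((n:ℝ)*(1 - binEntropy p + ε/2))) / ((n:ℝ)+1)
          ≤ (n.choose w : ℝ)/2^n := by
        rw [div_le_div_iff₀ (by positivity) (by positivity)]
        calc (2:ℝ)^(-((n:ℝ)*(1 - binEntropy p + ε/2))) * 2^n
            = (2:ℝ)^(-((n:ℝ)*(1 - binEntropy p + ε/2)) + n) := by
              rw [← Real.rpow_natCast 2 n, ← Real.rpow_add two_pos]
          _ ≤ (2:ℝ)^((n:ℝ) * binEntropy ((w:ℝ)/n)) := by
              apply Real.rpow_le_rpow_of_exponent_le one_le_two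
              nlinarith
          _ ≤ ((n:ℝ)+1) * (n.choose w : ℝ) := hcL
          _ = (n.choose w : ℝ) * ((n:ℝ)+1) := by ring
      set cc : ℝ := (n.choose w : ℝ)/2^n with hccdef
      have hcc0 : 0 ≤ cc := hc0 n w
      have hcc1 : cc ≤ 1 := hc1 n w
      have hstep1 : (1-cc)^(K n) ≤ (Real.exp (-cc))^(K n) := by
        apply pow_le_pow_left₀ (by linarith)
        linarith [Real.add_one_le_exp (-cc)]
      have hstep2 : (Real.exp (-cc))^(K n) = Real.exp ((K n : ℝ) * (-cc)) := by
        rw [Real.exp_nat_mul]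
      have hKge : (2:ℝ)^((n:ℝ)*(1 - binEntropy p + ε)) ≤ (K n : ℝ) := by
        rw [hK]
        exact Nat.le_ceil _
      have hMle : M ≤ (K n : ℝ) * cc := by
        have h1 : (2:ℝ)^((n:ℝ)*(1 - binEntropy p + ε)) *
            ((2:ℝ)^(-((n:ℝ)*(1 - binEntropy p + ε/2))) / ((n:ℝ)+1)) ≤ (K n : ℝ) * cc := by
          apply mul_le_mul hKge hL (by positivity) (by positivity)
        refine le_trans (le_of_eq ?_) h1
        have h2 : (2:ℝ)^((n:ℝ)*(1 - binEntropy p + ε)) *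
            (2:ℝ)^(-((n:ℝ)*(1 - binEntropy p + ε/2))) = Real.exp (c*n) := by
          rw [← Real.rpow_add two_pos, Real.rpow_def_of_pos two_pos]
          congr 1
          rw [hcdef]
          ring
        rw [hMdef, ← h2, mul_div_assoc]
      calc (1-cc)^(K n) ≤ (Real.exp (-cc))^(K n) := hstep1
        _ = Real.exp ((K n : ℝ) * (-cc)) := hstep2
        _ ≤ Real.exp (-M) := by
            apply Real.exp_le_exp.mpr
            have : (K n : ℝ) * (-cc) = -((K n : ℝ) * cc) := by ring
            rw [this]
            linarith
    -- per-f bound and summation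
    have hperf : ∀ f : Fin n → Bool,
        (∏ i, if f i then p else 1-p) *
          (1 - (n.choose (hammingDist f (fun _ => false)) : ℝ)/2^n)^(K n)
        ≤ (∏ i, if f i then p else 1-p) * Real.exp (-M) +
          (∏ i, if f i then p else 1-p) *
            ((((hammingDist f (fun _ => false) : ℕ) : ℝ) - n*p)^2 / (δ₀*n)^2) := by
      intro f
      set w : ℕ := hammingDist f (fun _ => false) with hwdef
      set μ : ℝ := ∏ i, if f i then p else 1-p with hμdef
      have hμ : 0 ≤ μ := hμ0 n f
      have hratio0 : 0 ≤ ((w:ℝ) - n*p)^2 / (δ₀*n)^2 := by positivity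
      by_cases hf : |((w:ℕ) : ℝ) - n*p| ≤ δ₀*n
      · have h1 := hgood f hf
        have h2 : μ * (1 - (n.choose w : ℝ)/2^n)^(K n) ≤ μ * Real.exp (-M) :=
          mul_le_mul_of_nonneg_left h1 hμ
        linarith [mul_nonneg hμ hratio0]
      · push_neg at hf
        have hsq : (δ₀*n)^2 < ((w:ℝ) - n*p)^2 := by
          have h0 : 0 ≤ δ₀*n := by positivity
          nlinarith [sq_abs ((w:ℝ) - n*p), abs_nonneg ((w:ℝ) - n*p)]
        have hratio1 : 1 ≤ ((w:ℝ) - n*p)^2 / (δ₀*n)^2 := by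
          rw [le_div_iff₀ (by positivity)]
          linarith
        have hpow1 : (1 - (n.choose w : ℝ)/2^n)^(K n) ≤ 1 := by
          apply pow_le_one₀
          · linarith [hc1 n w]
          · linarith [hc0 n w]
        have h3 : μ * (1 - (n.choose w : ℝ)/2^n)^(K n) ≤ μ * 1 :=
          mul_le_mul_of_nonneg_left hpow1 hμ
        have h4 : μ * 1 ≤ μ * (((w:ℝ) - n*p)^2 / (δ₀*n)^2) :=
          mul_le_mul_of_nonneg_left hratio1 hμ
        simp only [mul_one] at h3 h4
        linarith [mul_nonneg hμ (Real.exp_pos (-M)).le]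
    calc ∑ f : Fin n → Bool, (∏ i, if f i then p else 1-p) *
          (1 - (n.choose (hammingDist f (fun _ => false)) : ℝ)/2^n)^(K n)
        ≤ ∑ f : Fin n → Bool, ((∏ i, if f i then p else 1-p) * Real.exp (-M) +
            (∏ i, if f i then p else 1-p) *
              ((((hammingDist f (fun _ => false) : ℕ) : ℝ) - n*p)^2 / (δ₀*n)^2)) :=
          Finset.sum_le_sum (fun f _ => hperf f)
      _ = Real.exp (-M) + (1/(δ₀*n)^2) * (n * (p*(1-p))) := by
          rw [Finset.sum_add_distrib]
          congr 1
          · rw [← Finset.sum_mul, mu_sum n p, one_mul]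
          · rw [← variance_eq n p, Finset.mul_sum]
            apply Finset.sum_congr rfl
            intro f _
            ring
      _ ≤ 1/δ₀^2 * (1/(n:ℝ)) + Real.exp (-M) := by
          have hkey : (1/(δ₀*n)^2) * (n * (p*(1-p))) ≤ 1/δ₀^2 * (1/(n:ℝ)) := by
            have hpq : p*(1-p) ≤ 1 := by nlinarith
            have heq : (1/(δ₀*n)^2) * (n * (p*(1-p))) = (p*(1-p)) * (1/(δ₀^2*n)) := by
              field_simp
            have heq2 : 1/δ₀^2 * (1/(n:ℝ)) = 1 * (1/(δ₀^2*n)) := by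
              field_simp
            rw [heq, heq2]
            apply mul_le_mul_of_nonneg_right hpq (by positivity)
          linarith
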